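/- Let $n = p + q$ with $q \neq 0$, and let $\mu \in \mathbb{R}$ satisfy $0 < \mu \leq \frac{p - q}{p + q}$. Call a sequence $x_1, \dots, x_n \in \{-1, +1\}$ with exactly $p$ entries equal to $+1$ and $q$ entries equal to $-1$ good if $\sum_{i=1}^{j} x_i > \mu j$ for all $j \in \{1, \dots, n\}$. Then the number of good sequences is at least $\frac{p - \lfloor \frac{1+\mu}{1-\mu} q \rfloor}{n} \binom{n}{p}$. -/

import Mathlib

/-!
Extend `x` periodically and follow the walk `W t = x₀ + ⋯ + x_{t-1} - μ t`. The rotation of `x`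
starting at `s` is good as soon as `s` is a strict future minimum of `W`, i.e. `W s < W t` for all
`t > s`. The walk rises by at most `1 - μ` per step and by `d = p - q - μ n` per period, so with
`m` its minimum, for each level `m + k (1 - μ) < m + d` the last visit at or below that level is a
strict future minimum inside the first period, and different levels give different times. Hence
every sequence has at least `⌈d / (1 - μ)⌉ = p - ⌊(1 + μ) / (1 - μ) q⌋` good rotations, and
averaging over the `n` rotations of the `C(n, p)` sequences gives the bound.
-/

open Finset Function

theorem card_mul_le_card_mul_of_injective {α ι : Type*} [Fintype ι] [DecidableEq α]
    (A B : Finset α) (σ : ι → α → α) (hσ : ∀ i, Injective (σ i)) {K : ℕ}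
    (hK : ∀ x ∈ A, K ≤ #{i | σ i x ∈ B}) :
    #A * K ≤ Fintype.card ι * #B :=
  calc #A * K = ∑ _x ∈ A, K := by rw [sum_const, smul_eq_mul]
    _ ≤ ∑ x ∈ A, #{i | σ i x ∈ B} := sum_le_sum hK
    _ = ∑ i, #{x ∈ A | σ i x ∈ B} := by simp only [card_filter]; exact sum_comm
    _ ≤ ∑ _i : ι, #B := sum_le_sum fun i _ =>
        card_le_card_of_injOn (σ i) (fun _ hx => (mem_filter.mp hx).2) (hσ i).injOn
    _ = Fintype.card ι * #B := by rw [sum_const, card_univ, smul_eq_mul]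

section Walks

def IsStrictFutureMin (S : ℕ → ℝ) (s : ℕ) : Prop := ∀ t, s < t → S s < S t

theorem exists_last_le {S : ℕ → ℝ} {a N : ℕ} {c : ℝ} (ha : S a ≤ c)
    (hN : ∀ t, N ≤ t → c < S t) : ∃ s < N, S s ≤ c ∧ ∀ t, s < t → c < S t := by
  have haN : a < N := by by_contra! h; exact (hN a h).not_ge ha
  obtain ⟨s, hs, hmax⟩ := exists_max_image {t ∈ range N | S t ≤ c} id
    ⟨a, mem_filter.mpr ⟨mem_range.mpr haN, ha⟩⟩
  obtain ⟨hsN, hsc⟩ := mem_filter.mp hs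
  refine ⟨s, mem_range.mp hsN, hsc, fun t hst => ?_⟩
  by_contra! htc
  by_cases htN : t < N
  · exact hst.not_ge (hmax t (mem_filter.mpr ⟨mem_range.mpr htN, htc⟩))
  · exact (hN t (not_lt.mp htN)).not_ge htc

variable {S : ℕ → ℝ} {n : ℕ} {D : ℝ}

theorem le_of_forall_lt_of_periodic (hn : 0 < n) (hD : 0 ≤ D) (hper : ∀ t, S (t + n) = S t + D)
    {m : ℝ} (hm : ∀ t < n, m ≤ S t) (t : ℕ) : m ≤ S t := by
  induction t using Nat.strong_induction_on with
  | _ t ih =>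
    by_cases ht : t < n
    · exact hm t ht
    · obtain ⟨u, rfl⟩ := Nat.exists_eq_add_of_le' (not_lt.mp ht)
      rw [hper]
      linarith [ih u (by omega)]

open scoped Classical in
theorem le_card_isStrictFutureMin (hn : 0 < n) {h : ℝ} (hh : 0 ≤ h)
    (hstep : ∀ t, S (t + 1) ≤ S t + h) (hper : ∀ t, S (t + n) = S t + D) {K : ℕ}
    (hK : (K - 1) * h < D) : K ≤ #{s ∈ range n | IsStrictFutureMin S s} := by
  rcases Nat.eq_zero_or_pos K with rfl | hK0
  · exact Nat.zero_le _
  have hD : 0 < D := lt_of_le_of_lt (mul_nonneg (sub_nonneg.mpr (Nat.one_le_cast.mpr hK0)) hh) hK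
  obtain ⟨a, -, ha⟩ := exists_min_image (range n) S (nonempty_range_iff.mpr hn.ne')
  have hlow := le_of_forall_lt_of_periodic hn hD.le hper fun t ht => ha t (mem_range.mpr ht)
  have hhigh : ∀ t, n ≤ t → S a + D ≤ S t := fun t ht => by
    obtain ⟨u, rfl⟩ := Nat.exists_eq_add_of_le' ht
    rw [hper]
    linarith [hlow u]
  have hlevel : ∀ k < K, ∃ s < n, S s ≤ S a + k * h ∧ ∀ t, s < t → S a + k * h < S t := by
    intro k hk
    have hkh : k * h < D :=
      lt_of_le_of_lt (by gcongr; exact le_sub_iff_add_le.mpr (by exact_mod_cast hk)) hK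
    refine exists_last_le (a := a) (by nlinarith) fun t ht => ?_
    linarith [hhigh t ht]
  choose! f hfn hfle hflast using hlevel
  -- a step climbs at most `h`, so the last visit at or below level `k` is above level `k - 1`
  have hfgt : ∀ k < K, S a + k * h - h < S (f k) := fun k hk => by
    linarith [hflast k hk (f k + 1) (Nat.lt_succ_self _), hstep (f k)]
  have hfinj : ∀ k < K, ∀ l < K, f k = f l → l ≤ k := by
    intro k hk l hl hkl
    by_contra! hlt
    have hkl' : (k + 1 : ℝ) ≤ l := by exact_mod_cast hlt
    have := hfgt l hl
    rw [← hkl] at this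
    nlinarith [hfle k hk]
  calc K = #(range K) := (card_range K).symm
    _ ≤ _ := card_le_card_of_injOn f
      (fun k hk => by
        have hk := mem_range.mp hk
        exact mem_filter.mpr ⟨mem_range.mpr (hfn k hk), fun t ht =>
          lt_of_le_of_lt (hfle k hk) (hflast k hk t ht)⟩)
      (fun k hk l hl hkl => le_antisymm (hfinj l (mem_range.mp hl) k (mem_range.mp hk) hkl.symm)
        (hfinj k (mem_range.mp hk) l (mem_range.mp hl) hkl))

end Walks

section Sequences

variable {n : ℕ}

def cyclicShift {α : Type*} (s : Fin n) (x : Fin n → α) : Fin n → α := fun i => x (i + s)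

def IsGood (μ : ℝ) (x : Fin n → ℤ) : Prop :=
  ∀ j, 1 ≤ j → j ≤ n →
    μ * j < ((∑ i ∈ Finset.univ.filter (fun i : Fin n => (i : ℕ) < j), x i : ℤ) : ℝ)

variable [NeZero n]

open Fin.NatCast

theorem cyclicShift_injective {α : Type*} (s : Fin n) : Injective (cyclicShift (α := α) s) :=
  fun x y h => funext fun i => by simpa [cyclicShift] using congrFun h (i - s)

theorem sum_filter_val_lt {M : Type*} [AddCommMonoid M] (y : Fin n → M) {j : ℕ} (hj : j ≤ n) :
    ∑ i ∈ univ.filter (fun i : Fin n => (i : ℕ) < j), y i = ∑ i ∈ range j, y i := by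
  refine sum_nbij' Fin.val (fun i => i) ?_ ?_ ?_ ?_ ?_
  · intro i hi
    simpa using hi
  · intro i hi
    have hi := mem_range.mp hi
    simpa [Nat.mod_eq_of_lt (hi.trans_le hj)] using hi
  · intro i _
    simp
  · intro i hi
    simpa using Nat.mod_eq_of_lt ((mem_range.mp hi).trans_le hj)
  · intro i _
    simp

-- `(i : Fin n)` is `i % n`: this is the walk of the periodic extension of `x`.
def driftWalk (μ : ℝ) (x : Fin n → ℤ) (t : ℕ) : ℝ := ∑ i ∈ range t, (x i : ℝ) - μ * t

variable {μ : ℝ} {x : Fin n → ℤ}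

theorem driftWalk_succ_le (hx : ∀ i, x i ≤ 1) (t : ℕ) :
    driftWalk μ x (t + 1) ≤ driftWalk μ x t + (1 - μ) := by
  have : (x t : ℝ) ≤ 1 := by exact_mod_cast hx t
  simp only [driftWalk, sum_range_succ, Nat.cast_succ]
  linarith

theorem driftWalk_add_sub (s j : ℕ) :
    driftWalk μ x (s + j) - driftWalk μ x s = ∑ i ∈ range j, (x (i + s) : ℝ) - μ * j := by
  simp only [driftWalk, sum_range_add, Nat.cast_add, add_comm (s : Fin n)]
  ring

theorem driftWalk_add_period (t : ℕ) :
    driftWalk μ x (t + n) = driftWalk μ x t + (∑ i, (x i : ℝ) - μ * n) := by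
  rw [← sub_eq_iff_eq_add', driftWalk_add_sub,
    ← Fin.sum_univ_eq_sum_range (fun i => (x (i + t) : ℝ))]
  simp only [Fin.cast_val_eq_self]
  congr 1
  exact Fintype.sum_equiv (Equiv.addRight (t : Fin n)) _ _ fun _ => rfl

theorem isGood_cyclicShift_of_isStrictFutureMin {s : ℕ}
    (hs : IsStrictFutureMin (driftWalk μ x) s) : IsGood μ (cyclicShift s x) := by
  intro j hj hjn
  have := hs (s + j) (by omega)
  rw [← sub_pos, driftWalk_add_sub] at this
  rw [sum_filter_val_lt _ hjn]
  push_cast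
  simpa [cyclicShift, sub_pos] using this

open scoped Classical in
theorem le_card_isGood_cyclicShift (hx : ∀ i, x i ≤ 1) (hμ : μ < 1) {K : ℕ}
    (hK : (K - 1) * (1 - μ) < ∑ i, (x i : ℝ) - μ * n) :
    K ≤ #{s : Fin n | IsGood μ (cyclicShift s x)} := by
  refine (le_card_isStrictFutureMin (NeZero.pos n) (by linarith) (driftWalk_succ_le hx)
    driftWalk_add_period hK).trans (card_le_card_of_injOn (fun s => (s : Fin n)) ?_ ?_)
  · intro s hs
    exact mem_filter.mpr ⟨mem_univ _, isGood_cyclicShift_of_isStrictFutureMin (mem_filter.mp hs).2⟩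
  · intro s hs t ht hst
    have hsn := mem_range.mp (mem_filter.mp hs).1
    have htn := mem_range.mp (mem_filter.mp ht).1
    simpa [Nat.mod_eq_of_lt hsn, Nat.mod_eq_of_lt htn] using congrArg Fin.val hst

end Sequences

section SignVectors

variable {n : ℕ}

def signVector (A : Finset (Fin n)) : Fin n → ℤ := fun i => if i ∈ A then 1 else -1

theorem signVector_injective : Injective (signVector (n := n)) := by
  intro A B h
  ext i
  have := congrFun h i
  by_cases hA : i ∈ A <;> by_cases hB : i ∈ B <;> simp_all [signVector]

def signVectors (n p : ℕ) : Finset (Fin n → ℤ) := (powersetCard p univ).image signVector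

theorem card_signVectors (n p : ℕ) : #(signVectors n p) = n.choose p := by
  rw [signVectors, card_image_of_injective _ signVector_injective, card_powersetCard, card_univ,
    Fintype.card_fin]

theorem mem_signVectors {p : ℕ} {x : Fin n → ℤ} :
    x ∈ signVectors n p ↔ (∀ i, x i = 1 ∨ x i = -1) ∧ #{i | x i = 1} = p := by
  constructor
  · intro hx
    obtain ⟨A, hA, rfl⟩ := mem_image.mp hx
    refine ⟨fun i => by by_cases h : i ∈ A <;> simp [signVector, h], ?_⟩
    convert (mem_powersetCard.mp hA).2
    ext i
    by_cases h : i ∈ A <;> simp [signVector, h]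
  · rintro ⟨hpm, hp⟩
    refine mem_image.mpr
      ⟨({i | x i = 1} : Finset (Fin n)), mem_powersetCard.mpr ⟨subset_univ _, hp⟩, ?_⟩
    funext i
    rcases hpm i with h | h <;> simp [signVector, h]

theorem sum_eq_of_mem_signVectors {p : ℕ} {x : Fin n → ℤ} (hx : x ∈ signVectors n p) :
    ∑ i, x i = 2 * p - n := by
  obtain ⟨A, hA, rfl⟩ := mem_image.mp hx
  obtain ⟨-, hAp⟩ := mem_powersetCard.mp hA
  have hpn : p ≤ n := by simpa [hAp] using card_le_univ A
  simp only [signVector, sum_ite, sum_const, filter_mem_eq_inter, univ_inter, filter_not,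
    ← compl_eq_univ_sdiff, card_compl, Fintype.card_fin, hAp, nsmul_eq_mul]
  push_cast [hpn]
  ring

theorem cyclicShift_mem_signVectors [NeZero n] {p : ℕ} {x : Fin n → ℤ} (s : Fin n)
    (hx : x ∈ signVectors n p) : cyclicShift s x ∈ signVectors n p := by
  obtain ⟨hpm, hp⟩ := mem_signVectors.mp hx
  refine mem_signVectors.mpr ⟨fun i => hpm (i + s), hp ▸ card_equiv (Equiv.addRight s) ?_⟩
  intro i
  simp only [mem_filter, mem_univ, true_and, Equiv.coe_addRight]
  rfl

end SignVectors

theorem toNat_sub_floor_sub_one_mul_lt {p q : ℕ} {μ : ℝ} (hμ : μ < 1)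
    (hμpq : μ * (p + q) ≤ p - q) :
    ((((p : ℤ) - ⌊(1 + μ) / (1 - μ) * q⌋).toNat : ℝ) - 1) * (1 - μ) < p - q - μ * (p + q) := by
  have h1μ : 0 < 1 - μ := sub_pos.mpr hμ
  have hfloor : (1 + μ) / (1 - μ) * q - 1 < ⌊(1 + μ) / (1 - μ) * q⌋ := Int.sub_one_lt_floor _
  have hpos : ((p : ℝ) - ⌊(1 + μ) / (1 - μ) * q⌋ - 1) * (1 - μ) < p - q - μ * (p + q) :=
    calc ((p : ℝ) - ⌊(1 + μ) / (1 - μ) * q⌋ - 1) * (1 - μ)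
        < (p - (1 + μ) / (1 - μ) * q) * (1 - μ) := mul_lt_mul_of_pos_right (by linarith) h1μ
      _ = p - q - μ * (p + q) := by field_simp; ring
  rcases le_total 0 ((p : ℤ) - ⌊(1 + μ) / (1 - μ) * q⌋) with h | h
  · rw [← Int.cast_natCast, Int.toNat_of_nonneg h]
    push_cast
    exact hpos
  · rw [Int.toNat_of_nonpos h]
    push_cast
    linarith

open scoped Classical in
theorem le_card_cyclicShift_mem_filter_isGood {n p q : ℕ} [NeZero n] (hn : n = p + q) {μ : ℝ}
    (hμ : μ < 1) (hμpq : μ * (p + q) ≤ p - q) {x : Fin n → ℤ} (hx : x ∈ signVectors n p) :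
    (((p : ℤ) - ⌊(1 + μ) / (1 - μ) * q⌋).toNat) ≤
      #{s : Fin n | cyclicShift s x ∈ (signVectors n p).filter (IsGood μ)} := by
  have hle : ∀ i, x i ≤ 1 := fun i => by
    rcases (mem_signVectors.mp hx).1 i with h | h <;> simp [h]
  have hsum : ∑ i, (x i : ℝ) - μ * n = p - q - μ * (p + q) := by
    rw [← Int.cast_sum, sum_eq_of_mem_signVectors hx, hn]
    push_cast
    ring
  refine (le_card_isGood_cyclicShift hle hμ (hsum ▸ toNat_sub_floor_sub_one_mul_lt hμ hμpq)).trans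
    (card_le_card fun s hs => ?_)
  exact mem_filter.mpr ⟨mem_univ _,
    mem_filter.mpr ⟨cyclicShift_mem_signVectors s hx, (mem_filter.mp hs).2⟩⟩

open scoped Classical in
theorem ncard_setOf_isGood (n p : ℕ) (μ : ℝ) :
    {x : Fin n → ℤ | (∀ i, x i = 1 ∨ x i = -1) ∧ #{i | x i = 1} = p ∧ IsGood μ x}.ncard =
      #((signVectors n p).filter (IsGood μ)) := by
  rw [← Set.ncard_coe_finset]
  congr 1
  ext x
  simp [mem_signVectors, and_assoc]

theorem good_sequences_count_general
    (p q n : ℕ) (hn : n = p + q) (hq : q ≠ 0)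
    (μ : ℝ) (hμ1 : μ ≤ ((p : ℝ) - q) / ((p : ℝ) + q)) :
    ((p : ℝ) - ⌊(1 + μ) / (1 - μ) * q⌋) / n * (n.choose p) ≤
      (({x : Fin n → ℤ |
          (∀ i, x i = 1 ∨ x i = -1) ∧
          (Finset.univ.filter (fun i : Fin n => x i = 1)).card = p ∧
          ∀ j, 1 ≤ j → j ≤ n →
            μ * j <
              ((∑ i ∈ Finset.univ.filter (fun i : Fin n => (i : ℕ) < j), x i : ℤ) : ℝ)}).ncard
        : ℝ) := by
  classical
  have : NeZero n := ⟨by omega⟩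
  have hq0 : (0 : ℝ) < q := Nat.cast_pos.mpr (Nat.pos_of_ne_zero hq)
  have hpq : (0 : ℝ) < p + q := by positivity
  have hμ : μ < 1 := hμ1.trans_lt ((div_lt_one hpq).mpr (by linarith))
  set G := (signVectors n p).filter (IsGood μ)
  have hcount := card_mul_le_card_mul_of_injective _ G cyclicShift cyclicShift_injective
    fun x hx => le_card_cyclicShift_mem_filter_isGood hn hμ ((le_div_iff₀ hpq).mp hμ1) hx
  rw [card_signVectors, Fintype.card_fin] at hcount
  suffices h : ((p : ℝ) - ⌊(1 + μ) / (1 - μ) * q⌋) / n * n.choose p ≤ #G by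
    rwa [← ncard_setOf_isGood] at h
  rw [div_mul_eq_mul_div, div_le_iff₀ (by exact_mod_cast NeZero.pos n)]
  calc ((p : ℝ) - ⌊(1 + μ) / (1 - μ) * q⌋) * n.choose p
      ≤ ((p : ℤ) - ⌊(1 + μ) / (1 - μ) * q⌋).toNat * n.choose p := by
        gcongr
        exact_mod_cast Int.self_le_toNat _
    _ ≤ #G * n := by rw [mul_comm, mul_comm (#G : ℝ)]; exact_mod_cast hcount

/-- The number of sequences `x : Fin n → {-1,+1}` with exactly `p` entries `+1` and
`q = n - p ≠ 0` entries `-1` all of whose initial partial sums `∑_{i=1}^j xᵢ` strictly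
exceed `μ j` is at least `(p - ⌊(1+μ)/(1-μ) q⌋) / n * C(n, p)`. -/
theorem good_sequences_count
    (p q n : ℕ) (hn : n = p + q) (hq : q ≠ 0)
    (μ : ℝ) (hμ0 : 0 < μ) (hμ1 : μ ≤ ((p : ℝ) - q) / ((p : ℝ) + q)) :
    ((p : ℝ) - ⌊(1 + μ) / (1 - μ) * q⌋) / n * (n.choose p) ≤
      (({x : Fin n → ℤ |
          (∀ i, x i = 1 ∨ x i = -1) ∧
          (Finset.univ.filter (fun i : Fin n => x i = 1)).card = p ∧
          ∀ j, 1 ≤ j → j ≤ n →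
            μ * j <
              ((∑ i ∈ Finset.univ.filter (fun i : Fin n => (i : ℕ) < j), x i : ℤ) : ℝ)}).ncard
        : ℝ) :=
  good_sequences_count_general p q n hn hq μ hμ1
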